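/- arXiv:2104.07274 — 2 statements merged into one kernel-verified Lean document; each statement's English description precedes it below -/
import Mathlib

section
/- For a composition a, a positive integer s, and any positive integer n, the set D_{n+s'}^h((a,s)) of compositions h-dominating the concatenation (a,s) decomposes as the disjoint union over i of {(c,c') : c ∈ D_i^h(a), c' ∈ C_{n-i,s}}, where C_{k,s} is the set of compositions (c_1,...,c_m) of k with c_i < s for all i < m and c_m ≥ s. -/
/-- `l` is a composition of `n`: a list of positive integers summing to `n`. -/
def IsComposition (n : ℕ) (l : List ℕ) : Prop :=
  (∀ x ∈ l, 0 < x) ∧ l.sum = n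

/-- `b` dominates `a`: `b` has a subsequence whose terms are entrywise at least those of `a`. -/
def Dominates (b a : List ℕ) : Prop :=
  ∃ b' : List ℕ, b'.Sublist b ∧ List.Forall₂ (· ≤ ·) a b'

/-- `D_n(a)`: the set of compositions of `n` dominating `a`. -/
def domSet (n : ℕ) (a : List ℕ) : Set (List ℕ) :=
  {b | IsComposition n b ∧ Dominates b a}

/-- `b` h-dominates `a`: `b` dominates `a` and either `b` has one term or
its proper prefix (dropping the last term) does not dominate `a`. -/
def HDominates (b a : List ℕ) : Prop :=
  Dominates b a ∧ (b.length = 1 ∨ ¬ Dominates b.dropLast a)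

/-- `D_n^h(a)`: the set of compositions of `n` h-dominating `a`. -/
def hdomSet (n : ℕ) (a : List ℕ) : Set (List ℕ) :=
  {b | IsComposition n b ∧ HDominates b a}

/-- `C_{k,s}`: compositions of `k` all of whose terms are `< s` except the last, which is `≥ s`. -/
def lastBigSet (k s : ℕ) : Set (List ℕ) :=
  {c | IsComposition k c ∧ ∃ (l : List ℕ) (m : ℕ),
    c = l ++ [m] ∧ (∀ x ∈ l, x < s) ∧ s ≤ m}


/-! The h-dominating prefix of a composition is unique: it is its shortest prefix dominating `a`.
Splitting `b` after that prefix `c`, `b` dominates `(a, s)` iff a term `≥ s` occurs after `c`,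
and `b` h-dominates `(a, s)` iff the first such term is the last one, i.e. the rest of `b` lies in
`C_{n - |c|, s}`. Uniqueness of the prefix makes the union disjoint. -/

open List

theorem List.Forall₂.exists_of_append_singleton_left {α β : Type*} {R : α → β → Prop}
    {a : List α} {x : α} {w : List β} (h : Forall₂ R (a ++ [x]) w) :
    ∃ w₀ y, w = w₀ ++ [y] ∧ Forall₂ R a w₀ ∧ R x y := by
  induction a generalizing w with
  | nil =>
    obtain ⟨y, w', hxy, hw', rfl⟩ := forall₂_cons_left_iff.mp h
    rw [forall₂_nil_left_iff.mp hw']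
    exact ⟨[], y, rfl, .nil, hxy⟩
  | cons z a ih =>
    obtain ⟨y, w', hzy, hw', rfl⟩ := forall₂_cons_left_iff.mp h
    obtain ⟨w₀, y', rfl, hw₀, hxy'⟩ := ih hw'
    exact ⟨y :: w₀, y', rfl, .cons hzy hw₀, hxy'⟩

theorem IsComposition.append {i j : ℕ} {c d : List ℕ} (hc : IsComposition i c)
    (hd : IsComposition j d) : IsComposition (i + j) (c ++ d) :=
  ⟨fun x hx => (mem_append.mp hx).elim (hc.1 x) (hd.1 x), by rw [sum_append, hc.2, hd.2]⟩

theorem IsComposition.left_of_append {n : ℕ} {c d : List ℕ} (h : IsComposition n (c ++ d)) :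
    IsComposition c.sum c :=
  ⟨fun x hx => h.1 x (mem_append_left d hx), rfl⟩

theorem IsComposition.right_of_append {n : ℕ} {c d : List ℕ} (h : IsComposition n (c ++ d)) :
    IsComposition (n - c.sum) d :=
  ⟨fun x hx => h.1 x (mem_append_right c hx), by rw [← h.2, sum_append]; omega⟩

theorem IsComposition.pos {n : ℕ} {l : List ℕ} (h : IsComposition n l) (hl : l ≠ []) : 0 < n := by
  obtain ⟨x, l, rfl⟩ := exists_cons_of_ne_nil hl
  rw [← h.2, sum_cons]
  exact Nat.add_pos_left (h.1 x mem_cons_self) _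

theorem Dominates.length_le {b a : List ℕ} (h : Dominates b a) : a.length ≤ b.length := by
  obtain ⟨w, hw, hf⟩ := h
  exact hf.length_eq ▸ hw.length_le

theorem Dominates.ne_nil {b a : List ℕ} (h : Dominates b a) (ha : a ≠ []) : b ≠ [] := by
  rintro rfl
  exact ha (length_eq_zero_iff.mp (Nat.le_zero.mp h.length_le))

theorem Dominates.mono {b b' a : List ℕ} (h : Dominates b a) (hb : b <+ b') : Dominates b' a :=
  let ⟨w, hw, hf⟩ := h
  ⟨w, hw.trans hb, hf⟩

theorem dominates_append_singleton_iff {b a : List ℕ} {s : ℕ} :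
    Dominates b (a ++ [s]) ↔ ∃ c d, b = c ++ d ∧ Dominates c a ∧ ∃ x ∈ d, s ≤ x := by
  constructor
  · rintro ⟨w, hw, hf⟩
    obtain ⟨w₀, y, rfl, hw₀, hsy⟩ := hf.exists_of_append_singleton_left
    obtain ⟨c, d, rfl, hc, hd⟩ := append_sublist_iff.mp hw
    exact ⟨c, d, rfl, ⟨w₀, hc, hw₀⟩, y, singleton_sublist.mp hd, hsy⟩
  · rintro ⟨c, d, rfl, ⟨w, hw, hf⟩, x, hx, hsx⟩
    exact ⟨w ++ [x], hw.append (singleton_sublist.mpr hx), rel_append hf (.cons hsx .nil)⟩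

theorem hDominates_iff_of_ne_nil {c a : List ℕ} (ha : a ≠ []) :
    HDominates c a ↔ Dominates c a ∧ ¬ Dominates c.dropLast a := by
  refine and_congr_right fun _ => or_iff_right_of_imp fun hc hdom => ?_
  rw [dropLast_eq_take, hc, take_zero] at hdom
  exact hdom.ne_nil ha rfl

theorem HDominates.eq_of_prefix {c c' a : List ℕ} (hc : HDominates c a) (hc' : Dominates c' a)
    (h : c' <+: c) (ha : a ≠ []) : c' = c := by
  by_contra hne
  have hlt : c'.length < c.length := lt_of_le_of_ne h.length_le fun hl => hne (h.eq_of_length hl)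
  have : c' <+: c.dropLast := by
    rw [dropLast_eq_take]
    exact prefix_take_iff.mpr ⟨h, by omega⟩
  exact ((hDominates_iff_of_ne_nil ha).mp hc).2 (hc'.mono this.sublist)

theorem HDominates.eq_of_append_eq {c₁ c₂ d₁ d₂ a : List ℕ} (h₁ : HDominates c₁ a)
    (h₂ : HDominates c₂ a) (heq : c₁ ++ d₁ = c₂ ++ d₂) (ha : a ≠ []) : c₁ = c₂ := by
  rcases prefix_or_prefix_of_prefix (prefix_append c₁ d₁) (heq ▸ prefix_append c₂ d₂) with h | h
  · exact h₂.eq_of_prefix h₁.1 h ha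
  · exact (h₁.eq_of_prefix h₂.1 h ha).symm

theorem Dominates.exists_hDominates_prefix {b a : List ℕ} (h : Dominates b a) (ha : a ≠ []) :
    ∃ c d, b = c ++ d ∧ HDominates c a := by
  induction b using reverseRecOn with
  | nil => exact absurd rfl (h.ne_nil ha)
  | append_singleton b x ih =>
    by_cases hb : Dominates b a
    · obtain ⟨c, d, rfl, hc⟩ := ih hb
      exact ⟨c, d ++ [x], append_assoc c d [x], hc⟩
    · exact ⟨b ++ [x], [], (append_nil _).symm,
        (hDominates_iff_of_ne_nil ha).mpr ⟨h, by simpa using hb⟩⟩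

theorem HDominates.dominates_append_iff {c a d : List ℕ} {s : ℕ} (hc : HDominates c a)
    (ha : a ≠ []) : Dominates (c ++ d) (a ++ [s]) ↔ ∃ x ∈ d, s ≤ x := by
  refine ⟨fun h => ?_, fun ⟨x, hx, hsx⟩ =>
    dominates_append_singleton_iff.mpr ⟨c, d, rfl, hc.1, x, hx, hsx⟩⟩
  obtain ⟨c₀, d₀, heq, hc₀, x, hx, hsx⟩ := dominates_append_singleton_iff.mp h
  rcases append_eq_append_iff.mp heq with ⟨e, rfl, rfl⟩ | ⟨e, rfl, rfl⟩
  · exact ⟨x, mem_append_right e hx, hsx⟩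
  · obtain rfl : e = [] := by simpa using hc.eq_of_prefix hc₀ (prefix_append c₀ e) ha
    exact ⟨x, by simpa using hx, hsx⟩

theorem HDominates.hDominates_append_iff {c a d : List ℕ} {s : ℕ} (hc : HDominates c a)
    (ha : a ≠ []) :
    HDominates (c ++ d) (a ++ [s]) ↔ ∃ l m, d = l ++ [m] ∧ (∀ x ∈ l, x < s) ∧ s ≤ m := by
  rw [hDominates_iff_of_ne_nil (by simp)]
  rcases d.eq_nil_or_concat with rfl | ⟨l, m, rfl⟩
  · have h := hc.dominates_append_iff (d := []) (s := s) ha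
    simp only [append_nil] at h
    simp [h]
  · rw [concat_eq_append, ← append_assoc, dropLast_concat, hc.dominates_append_iff ha,
      append_assoc, hc.dominates_append_iff ha]
    simp only [append_singleton_inj, ↓existsAndEq, and_true, exists_eq_left', mem_append,
      mem_singleton, not_exists, not_and, not_le]
    grind

theorem mem_hdomSet_append_singleton_iff {a b : List ℕ} {s n : ℕ} (ha : a ≠ []) :
    b ∈ hdomSet n (a ++ [s]) ↔ ∃ i ∈ Finset.Ico 1 n,
      ∃ c c', b = c ++ c' ∧ c ∈ hdomSet i a ∧ c' ∈ lastBigSet (n - i) s := by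
  constructor
  · rintro ⟨hb, hdom⟩
    have hba : Dominates b a := by
      obtain ⟨c, d, rfl, hc, -⟩ := dominates_append_singleton_iff.mp hdom.1
      exact hc.mono (sublist_append_left c d)
    obtain ⟨c, d, rfl, hc⟩ := hba.exists_hDominates_prefix ha
    obtain ⟨l, m, rfl, hl, hm⟩ := (hc.hDominates_append_iff ha).mp hdom
    have hi : 0 < c.sum := hb.left_of_append.pos (hc.1.ne_nil ha)
    have hni : 0 < n - c.sum := hb.right_of_append.pos (by simp)
    exact ⟨c.sum, Finset.mem_Ico.mpr ⟨hi, by omega⟩, c, l ++ [m], rfl, ⟨hb.left_of_append, hc⟩,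
      hb.right_of_append, l, m, rfl, hl, hm⟩
  · rintro ⟨i, hi, c, d, rfl, ⟨hci, hc⟩, hdi, hd⟩
    have hin : i + (n - i) = n := by grind
    exact ⟨hin ▸ hci.append hdi, (hc.hDominates_append_iff ha).mpr hd⟩

theorem hdomSet_append_decomposition_general (a : List ℕ) (hane : a ≠ [])
    (s : ℕ) (n : ℕ) :
    (hdomSet n (a ++ [s]) =
      ⋃ i ∈ Finset.Ico 1 n,
        {b | ∃ c c' : List ℕ, b = c ++ c' ∧ c ∈ hdomSet i a ∧ c' ∈ lastBigSet (n - i) s}) ∧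
    (∀ i ∈ Finset.Ico 1 n, ∀ j ∈ Finset.Ico 1 n, i ≠ j →
      Disjoint
        {b : List ℕ | ∃ c c' : List ℕ, b = c ++ c' ∧ c ∈ hdomSet i a ∧ c' ∈ lastBigSet (n - i) s}
        {b : List ℕ | ∃ c c' : List ℕ, b = c ++ c' ∧ c ∈ hdomSet j a ∧ c' ∈ lastBigSet (n - j) s}) := by
  refine ⟨?_, fun i _ j _ hij => ?_⟩
  · ext b
    simpa only [Set.mem_iUnion, Set.mem_ofPred_eq, exists_prop] using
      mem_hdomSet_append_singleton_iff hane
  · rw [Set.disjoint_left]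
    rintro b ⟨c₁, d₁, rfl, ⟨hc₁, hhc₁⟩, -⟩ ⟨c₂, d₂, heq, ⟨hc₂, hhc₂⟩, -⟩
    exact hij (hc₁.2 ▸ hc₂.2 ▸ congrArg sum (hhc₁.eq_of_append_eq hhc₂ heq hane))

theorem hdomSet_append_decomposition (a : List ℕ) (ha : ∀ x ∈ a, 0 < x) (hane : a ≠ [])
    (s : ℕ) (hs : 0 < s) (n : ℕ) (hn : 0 < n) :
    (hdomSet n (a ++ [s]) =
      ⋃ i ∈ Finset.Ico 1 n,
        {b | ∃ c c' : List ℕ, b = c ++ c' ∧ c ∈ hdomSet i a ∧ c' ∈ lastBigSet (n - i) s}) ∧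
    (∀ i ∈ Finset.Ico 1 n, ∀ j ∈ Finset.Ico 1 n, i ≠ j →
      Disjoint
        {b : List ℕ | ∃ c c' : List ℕ, b = c ++ c' ∧ c ∈ hdomSet i a ∧ c' ∈ lastBigSet (n - i) s}
        {b : List ℕ | ∃ c c' : List ℕ, b = c ++ c' ∧ c ∈ hdomSet j a ∧ c' ∈ lastBigSet (n - j) s}) :=
  hdomSet_append_decomposition_general a hane s n
end

section
/- Let a = (a_1,...,a_m) and b = (b_1,...,b_k) be compositions. The 121-avoiding set partition with RGF 1^{b_1}2^{b_2}...k^{b_k} contains the pattern 1^{a_1}2^{a_2}...m^{a_m} if and only if b dominates a, i.e., b has a subsequence (b_{i(1)},...,b_{i(m)}) with b_{i(j)} ≥ a_j for all j. -/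
/-- The word `1^{a_1} 2^{a_2} ⋯ m^{a_m}` associated to the composition `a = (a_1, …, a_m)`. -/
def rgfWord (a : List ℕ) : List ℕ :=
  a.zipIdx.flatMap fun p => List.replicate p.1 (p.2 + 1)

/-- `w` is a restricted growth function: `w i ≥ 1` and each entry exceeds the
maximum of the previous entries by at most one (so the first entry is `1`). -/
def IsRGF (w : List ℕ) : Prop :=
  ∀ i < w.length, 1 ≤ w[i]! ∧ w[i]! ≤ ((w.take i).foldr max 0) + 1

/-- `w` contains the pattern `p`: some subsequence of `w` is order- and
equality-isomorphic to `p`. -/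
def ContainsPat (w p : List ℕ) : Prop :=
  ∃ w' : List ℕ, w'.Sublist w ∧ w'.length = p.length ∧
    ∀ i < p.length, ∀ j < p.length,
      (w'[i]! = w'[j]! ↔ p[i]! = p[j]!) ∧ (w'[i]! < w'[j]! ↔ p[i]! < p[j]!)

/-! Write `blockWord k a` for `(k+1)^{a_1} (k+2)^{a_2} ⋯`, so `rgfWord a = blockWord 0 a`; the
shift `k` makes both directions go by induction along the blocks. If `b_{i(1)} ≥ a_1, …`, taking
`a_j` letters from block `i(j)` of the text gives an occurrence, since block values increase.
Conversely, an occurrence meets the first block of the text it touches in a run of `t > 0` equal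
letters. Every later letter of the occurrence is strictly larger, and so is every letter of the
pattern after its first block, so comparing position `0` with position `min(t, a_1)` forces
`t = a_1`; this block dominates `a_1` and the rest of the occurrence is an occurrence of the rest. -/

open List

theorem getElem!_replicate_append {α : Type*} [Inhabited α] (n : ℕ) (c : α) (l : List α)
    (i : ℕ) : (replicate n c ++ l)[i]! = if i < n then c else l[i - n]! := by
  simp only [getElem!_eq_getElem?_getD, getElem?_append, length_replicate, getElem?_replicate]
  split <;> simp_all

theorem getElem!_drop {α : Type*} [Inhabited α] (l : List α) (n i : ℕ) :
    (l.drop n)[i]! = l[n + i]! := by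
  simp only [getElem!_eq_getElem?_getD, getElem?_drop]

section OrderIsomorphic

variable {α β : Type*} [LinearOrder α] [Inhabited α] [LinearOrder β] [Inhabited β]

def OrderIsomorphic (w : List α) (p : List β) : Prop :=
  w.length = p.length ∧ ∀ i < p.length, ∀ j < p.length,
    (w[i]! = w[j]! ↔ p[i]! = p[j]!) ∧ (w[i]! < w[j]! ↔ p[i]! < p[j]!)

theorem OrderIsomorphic.nil : OrderIsomorphic ([] : List α) ([] : List β) :=
  ⟨rfl, by simp⟩

theorem OrderIsomorphic.symm {w : List α} {p : List β} (h : OrderIsomorphic w p) :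
    OrderIsomorphic p w := by
  refine ⟨h.1.symm, fun i hi j hj => ?_⟩
  rw [h.1] at hi hj
  exact ⟨(h.2 i hi j hj).1.symm, (h.2 i hi j hj).2.symm⟩

theorem OrderIsomorphic.drop {w : List α} {p : List β} (h : OrderIsomorphic w p) (n : ℕ) :
    OrderIsomorphic (w.drop n) (p.drop n) := by
  refine ⟨by simp [h.1], fun i hi j hj => ?_⟩
  simp only [length_drop] at hi hj
  simp only [getElem!_drop]
  exact h.2 (n + i) (by omega) (n + j) (by omega)

theorem OrderIsomorphic.replicate_append {w : List α} {p : List β} {u : α} {v : β} (n : ℕ)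
    (hw : ∀ x ∈ w, u < x) (hp : ∀ y ∈ p, v < y) (h : OrderIsomorphic w p) :
    OrderIsomorphic (replicate n u ++ w) (replicate n v ++ p) := by
  have hw' : ∀ i < p.length, u < w[i]! := fun i hi => by
    rw [getElem!_pos w i (h.1 ▸ hi)]; exact hw _ (getElem_mem _)
  have hp' : ∀ i < p.length, v < p[i]! := fun i hi => by
    rw [getElem!_pos p i hi]; exact hp _ (getElem_mem _)
  refine ⟨by simp [h.1], fun i hi j hj => ?_⟩
  simp only [length_append, length_replicate] at hi hj
  simp only [getElem!_replicate_append]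
  by_cases hin : i < n <;> by_cases hjn : j < n <;> simp only [hin, hjn, if_true, if_false]
  · simp
  · have hu := hw' (j - n) (by omega)
    have hv := hp' (j - n) (by omega)
    exact ⟨iff_of_false hu.ne hv.ne, iff_of_true hu hv⟩
  · have hu := hw' (i - n) (by omega)
    have hv := hp' (i - n) (by omega)
    exact ⟨iff_of_false hu.ne' hv.ne', iff_of_false hu.asymm hv.asymm⟩
  · exact h.2 (i - n) (by omega) (j - n) (by omega)

theorem OrderIsomorphic.le_of_replicate_append {w : List α} {p : List β} {u : α} {v : β}
    {t s : ℕ} (h : OrderIsomorphic (replicate t u ++ w) (replicate s v ++ p)) (ht : 0 < t)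
    (hw : ∀ x ∈ w, u ≠ x) : s ≤ t := by
  by_contra! hts
  have hlen : t + w.length = s + p.length := by simpa using h.1
  have hfirst := (h.2 0 (by simp; omega) t (by simp; omega)).1
  simp only [getElem!_replicate_append, if_pos ht, if_pos hts, if_pos (ht.trans hts),
    lt_irrefl, if_false, Nat.sub_self, iff_true] at hfirst
  have hw₀ : 0 < w.length := by omega
  exact hw _ (getElem_mem hw₀) (by rwa [getElem!_pos w 0 hw₀] at hfirst)

theorem OrderIsomorphic.replicate_append_cancel {w : List α} {p : List β} {u : α} {v : β}
    {t s : ℕ} (h : OrderIsomorphic (replicate t u ++ w) (replicate s v ++ p)) (ht : 0 < t)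
    (hs : 0 < s) (hw : ∀ x ∈ w, u ≠ x) (hp : ∀ y ∈ p, v ≠ y) :
    t = s ∧ OrderIsomorphic w p := by
  obtain rfl : t = s := le_antisymm (h.symm.le_of_replicate_append hs hp)
    (h.le_of_replicate_append ht hw)
  simpa using h.drop t

end OrderIsomorphic

theorem containsPat_iff (w p : List ℕ) :
    ContainsPat w p ↔ ∃ w', w'.Sublist w ∧ OrderIsomorphic w' p :=
  Iff.rfl

theorem dominates_nil (b : List ℕ) : Dominates b [] :=
  ⟨[], nil_sublist b, .nil⟩

theorem Dominates.cons_left {b a : List ℕ} (h : Dominates b a) (x : ℕ) : Dominates (x :: b) a :=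
  let ⟨b', hb', hab'⟩ := h
  ⟨b', hb'.cons x, hab'⟩

theorem Dominates.cons_cons {b a : List ℕ} {x y : ℕ} (hxy : y ≤ x) (h : Dominates b a) :
    Dominates (x :: b) (y :: a) :=
  let ⟨b', hb', hab'⟩ := h
  ⟨x :: b', hb'.cons_cons x, .cons hxy hab'⟩

def blockWord : ℕ → List ℕ → List ℕ
  | _, [] => []
  | k, x :: xs => replicate x (k + 1) ++ blockWord (k + 1) xs

theorem blockWord_eq_flatMap (a : List ℕ) (k : ℕ) :
    blockWord k a = (a.zipIdx k).flatMap fun p => replicate p.1 (p.2 + 1) := by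
  induction a generalizing k with
  | nil => simp [blockWord]
  | cons x xs ih => simp [blockWord, zipIdx_cons, ih]

theorem rgfWord_eq_blockWord (a : List ℕ) : rgfWord a = blockWord 0 a :=
  (blockWord_eq_flatMap a 0).symm

theorem lt_of_mem_blockWord {a : List ℕ} {k x : ℕ} (hx : x ∈ blockWord k a) : k < x := by
  induction a generalizing k with
  | nil => simp [blockWord] at hx
  | cons y ys ih =>
    simp only [blockWord, mem_append, mem_replicate] at hx
    rcases hx with ⟨-, rfl⟩ | hx
    · omega
    · exact (ih hx).trans' (by omega)

theorem Dominates.exists_sublist_blockWord_orderIsomorphic {b a : List ℕ} (h : Dominates b a)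
    (k j : ℕ) : ∃ w, w.Sublist (blockWord k b) ∧ OrderIsomorphic w (blockWord j a) := by
  obtain ⟨b', hb', hab'⟩ := h
  induction hb' generalizing a k j with
  | slnil =>
    cases hab'
    exact ⟨[], nil_sublist _, .nil⟩
  | cons x _ ih =>
    obtain ⟨w, hw, hiso⟩ := ih (k + 1) j hab'
    exact ⟨w, hw.trans (sublist_append_right _ _), hiso⟩
  | cons_cons x _ ih =>
    obtain _ | ⟨hyx, hab'⟩ := hab'
    obtain ⟨w, hw, hiso⟩ := ih (k + 1) (j + 1) hab'
    exact ⟨replicate _ (k + 1) ++ w, ((replicate_sublist_replicate _).2 hyx).append hw,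
      hiso.replicate_append _ (fun _ hx => lt_of_mem_blockWord (hw.subset hx))
        (fun _ => lt_of_mem_blockWord)⟩

theorem dominates_of_sublist_blockWord_orderIsomorphic {b a w : List ℕ} {k j : ℕ}
    (ha : ∀ x ∈ a, 0 < x) (hw : w.Sublist (blockWord k b))
    (hiso : OrderIsomorphic w (blockWord j a)) : Dominates b a := by
  induction b generalizing a w k j with
  | nil =>
    obtain rfl := sublist_nil.mp hw
    cases a with
    | nil => exact dominates_nil []
    | cons y as =>
      have hlen := hiso.1
      simp only [blockWord, length_nil, length_append, length_replicate] at hlen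
      have := ha y mem_cons_self
      omega
  | cons x bs ih =>
    cases a with
    | nil => exact dominates_nil _
    | cons y as =>
      obtain ⟨w₁, w₂, rfl, hw₁, hw₂⟩ := sublist_append_iff.mp hw
      obtain ⟨t, htx, rfl⟩ := sublist_replicate_iff.mp hw₁
      rcases Nat.eq_zero_or_pos t with rfl | ht
      · exact (ih ha hw₂ (by simpa using hiso)).cons_left x
      · obtain ⟨rfl, hiso'⟩ := hiso.replicate_append_cancel ht (ha y mem_cons_self)
          (fun _ hz => (lt_of_mem_blockWord (hw₂.subset hz)).ne)
          (fun _ hz => (lt_of_mem_blockWord hz).ne)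
        exact (ih (fun z hz => ha z (mem_cons_of_mem _ hz)) hw₂ hiso').cons_cons htx

theorem contains_iff_dominates_general (a b : List ℕ)
    (ha : ∀ x ∈ a, 0 < x) :
    ContainsPat (rgfWord b) (rgfWord a) ↔ Dominates b a := by
  rw [containsPat_iff, rgfWord_eq_blockWord, rgfWord_eq_blockWord]
  constructor
  · rintro ⟨w, hw, hiso⟩
    exact dominates_of_sublist_blockWord_orderIsomorphic ha hw hiso
  · intro h
    exact h.exists_sublist_blockWord_orderIsomorphic 0 0

theorem contains_iff_dominates (a b : List ℕ)
    (ha : ∀ x ∈ a, 0 < x) (hb : ∀ x ∈ b, 0 < x) :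
    ContainsPat (rgfWord b) (rgfWord a) ↔ Dominates b a :=
  contains_iff_dominates_general a b ha
end
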